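/- arXiv:math/0010039 — 3 statements merged into one kernel-verified Lean document; each statement's English description precedes it below -/
import Mathlib

section
/- If the (A,L)-connection ∇ on M is flat (a left (A,L)-module structure), then the induced right (A,L)-connection on Hom_A(Λ^n_A L, M) given by (φ ∘ α)(x) = φ(λ_α(x)) − ∇_α(φ(x)) is flat, i.e. defines a right (A,L)-module structure: (φ ∘ α) ∘ β − (φ ∘ β) ∘ α = φ ∘ [α,β]. -/
/-! Common setup: Lie-Rinehart algebras, the exterior algebra `Λ_A L`
(realized as `ExteriorAlgebra A L` with its exterior powers `⋀[A]^p L`),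
Gerstenhaber brackets and their generators, left/right `(A,L)`-connections,
Lie derivatives on the top exterior power, covariant derivatives of forms,
and the constant-rank condition. -/

open ExteriorAlgebra

/-- A Lie-Rinehart algebra `(A,L)` over the commutative ring `R`:
`A` is a commutative `R`-algebra, `L` is an `R`-Lie algebra and an `A`-module,
acting on `A` by derivations via the anchor `ρ`, with the usual compatibilities. -/
structure LieRinehart (R A L : Type*) [CommRing R] [CommRing A] [Algebra R A]
    [LieRing L] [Module R L] [Module A L] where
  ρ : L → A → A
  ρ_add_right : ∀ α a b, ρ α (a + b) = ρ α a + ρ α b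
  ρ_leibniz : ∀ α a b, ρ α (a * b) = a * ρ α b + ρ α a * b
  ρ_algebraMap : ∀ α (r : R), ρ α (algebraMap R A r) = 0
  ρ_add_left : ∀ α β a, ρ (α + β) a = ρ α a + ρ β a
  ρ_smul_left : ∀ (a : A) α b, ρ (a • α) b = a * ρ α b
  ρ_bracket : ∀ α β a, ρ ⁅α, β⁆ a = ρ α (ρ β a) - ρ β (ρ α a)
  leibniz : ∀ (a : A) (α β : L), ⁅α, a • β⁆ = a • ⁅α, β⁆ + ρ α a • β

namespace LieRinehart

variable {R A L : Type*} [CommRing R] [CommRing A] [Algebra R A]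
  [LieRing L] [Module R L] [Module A L]
variable (LR : LieRinehart R A L)

/-- The Gerstenhaber bracket on `Λ_A L`: it extends the Lie bracket on `L`
and the action of `L` on `A` (we record the characterizing identities needed). -/
def IsGerstenhaberBracket
    (gb : ExteriorAlgebra A L → ExteriorAlgebra A L → ExteriorAlgebra A L) : Prop :=
  (∀ x y z : ExteriorAlgebra A L, gb (x + y) z = gb x z + gb y z) ∧
  (∀ x y z : ExteriorAlgebra A L, gb x (y + z) = gb x y + gb x z) ∧
  (∀ α β : L, gb (ι A α) (ι A β) = ι A ⁅α, β⁆) ∧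
  (∀ (α : L) (a : A), gb (ι A α) (algebraMap A (ExteriorAlgebra A L) a)
      = algebraMap A (ExteriorAlgebra A L) (LR.ρ α a))

/-- `D` is an `R`-linear operator of degree `-1` on `Λ_A L` generating the
Gerstenhaber bracket `gb`: the deviation of `D` from being a derivation of the
wedge product is the bracket (standard sign convention). -/
def IsGenerator (gb : ExteriorAlgebra A L → ExteriorAlgebra A L → ExteriorAlgebra A L)
    (D : ExteriorAlgebra A L → ExteriorAlgebra A L) : Prop :=
  (∀ x y, D (x + y) = D x + D y) ∧
  (∀ (r : R) (x : ExteriorAlgebra A L), D (algebraMap R A r • x) = algebraMap R A r • D x) ∧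
  (∀ (p : ℕ) (x : ExteriorAlgebra A L), x ∈ ⋀[A]^p L → D x ∈ ⋀[A]^(p-1) L) ∧
  (∀ (p : ℕ) (x y : ExteriorAlgebra A L), x ∈ ⋀[A]^p L →
    gb x y = (-1 : ℤ)^p • (D (x * y) - D x * y - (-1 : ℤ)^p • (x * D y)))

/-- The degree-zero coefficient `Dα ∈ A` of the value of a generator on `α ∈ L`. -/
def DA (D : ExteriorAlgebra A L → ExteriorAlgebra A L) (α : L) : A :=
  algebraMapInv (D (ι A α))

/-- A right `(A,L)`-connection on `A`:  `(a*b) ∘ α = a (b ∘ α) - α(a) b` and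
`a ∘ (b • α) = (a*b) ∘ α`. -/
def IsRightConnA (c : A → L → A) : Prop :=
  (∀ a b α, c (a + b) α = c a α + c b α) ∧
  (∀ a α β, c a (α + β) = c a α + c a β) ∧
  (∀ a b α, c (a * b) α = a * c b α - LR.ρ α a * b) ∧
  (∀ a b α, c a (b • α) = c (a * b) α)

/-- A flat right `(A,L)`-connection on `A`, i.e. a right `(A,L)`-module structure. -/
def IsRightModuleA (c : A → L → A) : Prop :=
  LR.IsRightConnA c ∧ ∀ a α β, c (c a α) β - c (c a β) α = c a ⁅α, β⁆

/-- A (left) `(A,L)`-connection on an `A`-module `M`. -/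
def IsConnection {M : Type*} [AddCommGroup M] [Module A M] (c : L → M → M) : Prop :=
  (∀ α β m, c (α + β) m = c α m + c β m) ∧
  (∀ α m m', c α (m + m') = c α m + c α m') ∧
  (∀ (a : A) α m, c (a • α) m = a • c α m) ∧
  (∀ (a : A) α m, c α (a • m) = a • c α m + LR.ρ α a • m)

/-- A flat (left) `(A,L)`-connection, i.e. a left `(A,L)`-module structure. -/
def IsFlatConnection {M : Type*} [AddCommGroup M] [Module A M] (c : L → M → M) : Prop :=
  LR.IsConnection c ∧ ∀ α β m, c ⁅α, β⁆ m = c α (c β m) - c β (c α m)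

/-- A right `(A,L)`-connection on an `A`-module `N`. -/
def IsRightConnection {N : Type*} [AddCommGroup N] [Module A N] (c : N → L → N) : Prop :=
  (∀ v w α, c (v + w) α = c v α + c w α) ∧
  (∀ v α β, c v (α + β) = c v α + c v β) ∧
  (∀ (a : A) v α, c (a • v) α = a • c v α - LR.ρ α a • v) ∧
  (∀ (a : A) v α, c v (a • α) = c (a • v) α)

/-- A flat right `(A,L)`-connection, i.e. a right `(A,L)`-module structure. -/
def IsRightModule {N : Type*} [AddCommGroup N] [Module A N] (c : N → L → N) : Prop :=
  LR.IsRightConnection c ∧ ∀ v α β, c (c v α) β - c (c v β) α = c v ⁅α, β⁆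

end LieRinehart

section ExtPower

variable {A L : Type*} [CommRing A] [AddCommGroup L] [Module A L]

/-- The decomposable element `ξ₁ ∧ … ∧ ξ_n` of `⋀[A]^n L`. -/
def wMulti (A : Type*) {L : Type*} [CommRing A] [AddCommGroup L] [Module A L]
    (n : ℕ) (ξ : Fin n → L) : ⋀[A]^n L :=
  ⟨ιMulti A n ξ, ιMulti_range A n (Set.mem_range_self ξ)⟩

/-- The wedge pairing `⋀^p ⊗ ⋀^q → ⋀^n` (`p + q = n`). -/
def wedgePair {n p q : ℕ} (h : p + q = n) (α : ⋀[A]^p L) (β : ⋀[A]^q L) : ⋀[A]^n L :=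
  ⟨(α : ExteriorAlgebra A L) * (β : ExteriorAlgebra A L), by
    subst h
    show _ ∈ LinearMap.range (ι A : L →ₗ[A] ExteriorAlgebra A L) ^ (p + q)
    rw [pow_add]
    exact Submodule.mul_mem_mul α.2 β.2⟩

/-- The image `φ_α` of `α ∈ ⋀^p` under the adjoint of the wedge pairing, viewed as the
`q`-form `(ξ₁, …, ξ_q) ↦ α ∧ ξ₁ ∧ … ∧ ξ_q` with values in `⋀^n` (`p + q = n`). -/
def phiForm {n p q : ℕ} (h : p + q = n) (α : ⋀[A]^p L) (ξ : Fin q → L) : ⋀[A]^n L :=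
  wedgePair h α (wMulti A q ξ)

/-- `L` has constant rank `n` over `A`: the localization at every prime of `A`
is (free) of rank `n`. -/
def ConstantRank (A L : Type*) [CommRing A] [AddCommGroup L] [Module A L] (n : ℕ) : Prop :=
  ∀ p : PrimeSpectrum A,
    Module.finrank (Localization p.asIdeal.primeCompl)
      (LocalizedModule p.asIdeal.primeCompl L) = n

end ExtPower

section CovDeriv

variable {A L : Type*} [CommRing A] [LieRing L] [Module A L]

/-- The argument list `([ξ_j,ξ_k], ξ_0, …, ξ̂_j, …, ξ̂_k, …, ξ_q)` obtained from
`ξ : Fin (q+1) → L` by omitting the entries `j < k` and prepending `br`. -/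
def dblOmit {q : ℕ} (ξ : Fin (q + 1) → L) (br : L) (j k : Fin (q + 1)) : Fin q → L :=
  fun i =>
    if h0 : (i : ℕ) = 0 then br
    else
      ξ ⟨if (i : ℕ) - 1 < (j : ℕ) then (i : ℕ) - 1
         else if (i : ℕ) < (k : ℕ) then (i : ℕ) else (i : ℕ) + 1, by
        have h1 := i.isLt
        have h2 := j.isLt
        have h3 := k.isLt
        split_ifs <;> omega⟩

/-- The covariant derivative `d^∇` (Cartan formula) sending an `M`-valued `q`-form on `L`
to a `(q+1)`-form, with respect to the connection-type operation `c`. -/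
def covDeriv {M : Type*} [AddCommGroup M] (c : L → M → M) (q : ℕ)
    (f : (Fin q → L) → M) (ξ : Fin (q + 1) → L) : M :=
  (∑ j : Fin (q + 1), (-1 : ℤ)^(j : ℕ) • c (ξ j) (f (ξ ∘ j.succAbove))) +
    ∑ j : Fin (q + 1), ∑ k : Fin (q + 1),
      if (j : ℕ) < (k : ℕ) then
        (-1 : ℤ)^((j : ℕ) + (k : ℕ)) • f (dblOmit ξ ⁅ξ j, ξ k⁆ j k)
      else 0

end CovDeriv

section LieDeriv

variable {R A L : Type*} [CommRing R] [CommRing A] [Algebra R A]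
  [LieRing L] [Module R L] [Module A L]

/-- `lam` is the Lie derivative of `L` on `⋀[A]^n L`:
`λ_α(ξ₁∧…∧ξ_n) = Σ_j ξ₁∧…∧[α,ξ_j]∧…∧ξ_n`, together with its derivation property. -/
def LieRinehart.IsLieDeriv (LR : LieRinehart R A L) (n : ℕ)
    (lam : L → ⋀[A]^n L → ⋀[A]^n L) : Prop :=
  (∀ α x y, lam α (x + y) = lam α x + lam α y) ∧
  (∀ α (a : A) x, lam α (a • x) = a • lam α x + LR.ρ α a • x) ∧
  (∀ α (ξ : Fin n → L),
    lam α (wMulti A n ξ) = ∑ j : Fin n, wMulti A n (Function.update ξ j ⁅α, ξ j⁆))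

/-- `cTop` is the `(A,L)`-connection on `⋀[A]^n L` induced by the connection `cL` on `L`:
`∇_α(ξ₁∧…∧ξ_n) = Σ_j ξ₁∧…∧∇^L_α(ξ_j)∧…∧ξ_n`. -/
def LieRinehart.IsInducedTop (LR : LieRinehart R A L) (n : ℕ)
    (cL : L → L → L) (cTop : L → ⋀[A]^n L → ⋀[A]^n L) : Prop :=
  LR.IsConnection cTop ∧
  ∀ α (ξ : Fin n → L),
    cTop α (wMulti A n ξ) = ∑ j : Fin n, wMulti A n (Function.update ξ j (cL α (ξ j)))

end LieDeriv

open LieRinehart ExteriorAlgebra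

variable {R A L : Type*} [CommRing R] [CommRing A] [Algebra R A]
  [LieRing L] [Module R L] [Module A L]

/-! The curvature `λ_α λ_β − λ_β λ_α − λ_{[α,β]}` of the Lie derivative on `⋀^n_A L` is
`A`-linear (the anchor terms cancel because `ρ` is a Lie algebra map), so it vanishes as
soon as it vanishes on decomposables `ξ₁ ∧ … ∧ ξ_n`; there it is the Jacobi identity in one
slot, the terms bracketing two different slots cancelling in pairs. Flatness of `∘` then
follows by expanding both sides, using flatness of `λ` and of `∇`. -/

lemma Function.update_update_apply_comm {ι V : Type*} [DecidableEq ι] (D E : V → V)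
    (ξ : ι → V) {j k : ι} (h : j ≠ k) :
    Function.update (Function.update ξ j (E (ξ j))) k (D (Function.update ξ j (E (ξ j)) k))
      = Function.update (Function.update ξ k (D (ξ k))) j
          (E (Function.update ξ k (D (ξ k)) j)) := by
  rw [Function.update_of_ne h.symm, Function.update_of_ne h, Function.update_comm h]

namespace MultilinearMap

variable {S ι V N : Type*} [CommRing S] [Fintype ι] [DecidableEq ι]
  [AddCommGroup V] [Module S V] [AddCommGroup N] [Module S N]

/-- `D` acting on the values of `f` as a derivation; `λ_α` is this for `D = ⁅α, ·⁆`. -/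
def sumUpdate (f : MultilinearMap S (fun _ : ι => V) N) (D : V → V) (ξ : ι → V) : N :=
  ∑ j, f (Function.update ξ j (D (ξ j)))

lemma sum_sumUpdate_update_sub (f : MultilinearMap S (fun _ : ι => V) N) (D E : V → V)
    (ξ : ι → V) :
    ∑ j, f.sumUpdate D (Function.update ξ j (E (ξ j)))
        - ∑ j, f.sumUpdate E (Function.update ξ j (D (ξ j)))
      = f.sumUpdate (fun v => D (E v) - E (D v)) ξ := by
  unfold sumUpdate
  rw [Finset.sum_comm (f := fun j k => f (Function.update (Function.update ξ j (D (ξ j))) k _)),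
    ← Finset.sum_sub_distrib]
  refine Finset.sum_congr rfl fun j _ => ?_
  rw [← Finset.sum_sub_distrib, Finset.sum_eq_single j]
  · simp only [Function.update_self, Function.update_idem, f.map_update_sub]
  · intro k _ hk
    rw [Function.update_update_apply_comm D E ξ hk.symm, sub_self]
  · exact fun h => absurd (Finset.mem_univ j) h

end MultilinearMap

lemma wMulti_eq_ιMulti (n : ℕ) (ξ : Fin n → L) :
    wMulti A n ξ = exteriorPower.ιMulti A n ξ := rfl

namespace LieRinehart.IsLieDeriv

variable {LR : LieRinehart R A L} {n : ℕ} {lam : L → ⋀[A]^n L → ⋀[A]^n L}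

lemma apply_wMulti (hlam : LR.IsLieDeriv n lam) (α : L) (ξ : Fin n → L) :
    lam α (wMulti A n ξ)
      = (exteriorPower.ιMulti A n).toMultilinearMap.sumUpdate (fun v => ⁅α, v⁆) ξ :=
  hlam.2.2 α ξ

def curvature (hlam : LR.IsLieDeriv n lam) (α β : L) : ⋀[A]^n L →ₗ[A] ⋀[A]^n L where
  toFun x := lam α (lam β x) - lam β (lam α x) - lam ⁅α, β⁆ x
  map_add' x y := by
    simp only [hlam.1]
    abel
  map_smul' a x := by
    simp only [hlam.2.1, hlam.1, RingHom.id_apply, smul_sub]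
    rw [LR.ρ_bracket, sub_smul (LR.ρ α (LR.ρ β a)) (LR.ρ β (LR.ρ α a)) x]
    abel

lemma curvature_apply (hlam : LR.IsLieDeriv n lam) (α β : L) (x : ⋀[A]^n L) :
    hlam.curvature α β x = lam α (lam β x) - lam β (lam α x) - lam ⁅α, β⁆ x := rfl

lemma curvature_eq_zero (hlam : LR.IsLieDeriv n lam) (α β : L) : hlam.curvature α β = 0 := by
  ext ξ
  have hsum : ∀ γ δ, lam γ (lam δ (exteriorPower.ιMulti A n ξ))
      = ∑ j, (exteriorPower.ιMulti A n).toMultilinearMap.sumUpdate (fun v => ⁅γ, v⁆)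
          (Function.update ξ j ⁅δ, ξ j⁆) := fun γ δ => by
    rw [← wMulti_eq_ιMulti, hlam.apply_wMulti, MultilinearMap.sumUpdate]
    exact (map_sum (AddMonoidHom.mk' (lam γ) (hlam.1 γ)) _ _).trans
      (Finset.sum_congr rfl fun j _ => hlam.apply_wMulti γ _)
  rw [LinearMap.compAlternatingMap_apply, curvature_apply, hsum, hsum,
    MultilinearMap.sum_sumUpdate_update_sub, ← wMulti_eq_ιMulti, hlam.apply_wMulti]
  simp only [← lie_lie, sub_self, LinearMap.zero_compAlternatingMap, AlternatingMap.zero_apply]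

lemma lie_apply (hlam : LR.IsLieDeriv n lam) (α β : L) (x : ⋀[A]^n L) :
    lam ⁅α, β⁆ x = lam α (lam β x) - lam β (lam α x) := by
  rw [eq_comm, ← sub_eq_zero, ← curvature_apply hlam, curvature_eq_zero, LinearMap.zero_apply]

end LieRinehart.IsLieDeriv

theorem hom_right_connection_flat_general (LR : LieRinehart R A L)
    (n : ℕ)
    {M : Type*} [AddCommGroup M] [Module A M]
    (cM : L → M → M) (hcM : LR.IsFlatConnection cM)
    (lam : L → ⋀[A]^n L → ⋀[A]^n L) (hlam : LR.IsLieDeriv n lam)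
    (cHom : ((⋀[A]^n L) →ₗ[A] M) → L → ((⋀[A]^n L) →ₗ[A] M))
    (hdef : ∀ φ α (x : ⋀[A]^n L), cHom φ α x = φ (lam α x) - cM α (φ x)) :
    ∀ φ α β, cHom (cHom φ α) β - cHom (cHom φ β) α = cHom φ ⁅α, β⁆ := by
  intro φ α β
  have cM_sub : ∀ (γ : L) (m m' : M), cM γ (m - m') = cM γ m - cM γ m' :=
    fun γ => (AddMonoidHom.mk' (cM γ) (hcM.1.2.1 γ)).map_sub
  refine LinearMap.ext fun x => ?_
  simp only [LinearMap.sub_apply, hdef]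
  rw [cM_sub, cM_sub, hlam.lie_apply, map_sub φ, hcM.2 α β (φ x)]
  abel

/-- if the `(A,L)`-connection `∇` on `M` is flat, then the induced right
`(A,L)`-connection `(φ ∘ α)(x) = φ(λ_α(x)) − ∇_α(φ(x))` on `Hom_A(⋀^n L, M)` is flat:
`(φ ∘ α) ∘ β − (φ ∘ β) ∘ α = φ ∘ [α,β]`. -/
theorem hom_right_connection_flat (LR : LieRinehart R A L)
    (n : ℕ) [Module.Finite A L] [Module.Projective A L] (hrank : ConstantRank A L n)
    {M : Type*} [AddCommGroup M] [Module A M]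
    (cM : L → M → M) (hcM : LR.IsFlatConnection cM)
    (lam : L → ⋀[A]^n L → ⋀[A]^n L) (hlam : LR.IsLieDeriv n lam)
    (cHom : ((⋀[A]^n L) →ₗ[A] M) → L → ((⋀[A]^n L) →ₗ[A] M))
    (hdef : ∀ φ α (x : ⋀[A]^n L), cHom φ α x = φ (lam α x) - cM α (φ x)) :
    ∀ φ α β, cHom (cHom φ α) β - cHom (cHom φ β) α = cHom φ ⁅α, β⁆ :=
  hom_right_connection_flat_general LR n cM hcM lam hlam cHom hdef
end

section
/- Let D be a generator of the Gerstenhaber bracket on Λ_A L corresponding to the (A,L)-connection ∇ on Λ^n_A L, with L finitely generated projective of constant rank n. For α ∈ Λ^p_A L and β ∈ Λ^{n−p}_A L, one has d^∇φ_α(β) = (−1)^p α ∧ (Dβ) + (−1)^p [α, β], where [ , ] is the Gerstenhaber bracket. -/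
/-! Common setup: Lie-Rinehart algebras, the exterior algebra `Λ_A L`
(realized as `ExteriorAlgebra A L` with its exterior powers `⋀[A]^p L`),
Gerstenhaber brackets and their generators, left/right `(A,L)`-connections,
Lie derivatives on the top exterior power, covariant derivatives of forms,
and the constant-rank condition. -/

open ExteriorAlgebra

open LieRinehart ExteriorAlgebra

variable {R A L : Type*} [CommRing R] [CommRing A] [Algebra R A]
  [LieRing L] [Module R L] [Module A L]

/-- The relation `φ_{D α} = - d^∇ (φ_α)` between a degree `-1` operator `D` on `Λ_A L`
and a connection-type operation `cTop` on `⋀[A]^n L`, expressed on all exterior degrees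
(with `Λ^{-1} = 0` for `p = 0`). -/
def GenConnRel (LR : LieRinehart R A L) (n : ℕ)
    (D : ExteriorAlgebra A L → ExteriorAlgebra A L)
    (cTop : L → ⋀[A]^n L → ⋀[A]^n L) : Prop :=
  (∀ (p m : ℕ) (h : p + 1 + m = n) (α : ⋀[A]^(p+1) L)
      (hD : D (α : ExteriorAlgebra A L) ∈ ⋀[A]^p L) (ξ : Fin (m+1) → L),
      phiForm (show p + (m+1) = n by omega) ⟨D (α : ExteriorAlgebra A L), hD⟩ ξ
        = - covDeriv cTop m (phiForm h α) ξ) ∧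
  (∀ (m : ℕ) (h : 0 + m = n) (α : ⋀[A]^0 L) (ξ : Fin (m+1) → L),
      covDeriv cTop m (phiForm h α) ξ = 0)

/-! Since `L` is locally free of rank `n`, `Λ^{n+1}_A L = 0`. Hence `α ∧ β = 0` and
`D(α ∧ β) = 0`, so the generator identity reduces to
`(−1)^p α ∧ Dβ + (−1)^p [α, β] = −Dα ∧ β`, and `−Dα ∧ β = d^∇φ_α(β)` is the relation
`φ_{Dα} = −d^∇φ_α`. For `p = 0` both sides vanish because `β` itself lies in `Λ^{n+1}_A L`. -/

theorem ExteriorAlgebra.ιMulti_eq_zero_of_basis_of_lt {K M : Type*} [CommRing K]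
    [AddCommGroup M] [Module K M] {n k : ℕ} (b : Module.Basis (Fin n) K M) (hk : n < k)
    (v : Fin k → M) : ιMulti K k v = 0 := by
  have : IsEmpty (Set.powersetCard (Fin n) k) :=
    ⟨fun s => by
      have := Finset.card_le_univ (s : Finset (Fin n))
      rw [Set.powersetCard.card_eq, Fintype.card_fin] at this
      omega⟩
  have hv : exteriorPower.ιMulti K k v = 0 :=
    (b.exteriorPower k).repr.injective (Subsingleton.elim _ _)
  simpa using congrArg Subtype.val hv

namespace LocalizedModule

variable {A E : Type*} [CommRing A] [Ring E] [Algebra A E] (S : Submonoid A)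

/-- Unlike `LocalizedModule.algebraOfIsLocalization`, this is compatible with the standard
`Localization S`-module structure on `LocalizedModule S E`. -/
noncomputable abbrev algebraLocalization : Algebra (Localization S) (LocalizedModule S E) :=
  Algebra.ofModule
    (fun x p q => by
      induction x using Localization.induction_on
      induction p, q using LocalizedModule.induction_on₂
      rw [mk_smul_mk, mk_mul_mk, mk_mul_mk, mk_smul_mk, smul_mul_assoc, mul_assoc])
    (fun x p q => by
      induction x using Localization.induction_on with | H x => ?_
      induction p, q using LocalizedModule.induction_on₂ with | _ a s b t => ?_
      rw [mk_smul_mk, mk_mul_mk, mk_mul_mk, mk_smul_mk, mul_smul_comm, mul_left_comm b x.2 t])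

end LocalizedModule

section Localization

open LocalizedModule

attribute [local instance] LocalizedModule.algebraLocalization

variable {A L : Type*} [CommRing A] [AddCommGroup L] [Module A L] (S : Submonoid A)

noncomputable def ExteriorAlgebra.toLocalizedModule :
    ExteriorAlgebra (Localization S) (LocalizedModule S L) →ₐ[Localization S]
      LocalizedModule S (ExteriorAlgebra A L) :=
  lift _ ⟨LocalizedModule.map S (ι A), fun x => by
    induction x using LocalizedModule.induction_on
    rw [map_mk, mk_mul_mk, ι_sq_zero, zero_mk]⟩

theorem ExteriorAlgebra.toLocalizedModule_ιMulti {k : ℕ} (ξ : Fin k → L) :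
    toLocalizedModule S (ιMulti (Localization S) k fun i => mk (ξ i) 1) =
      mk (ιMulti A k ξ) 1 := by
  have hι : ∀ x : L, toLocalizedModule S (ι _ (mk x 1)) = numeratorRingHom (ι A x) :=
    fun x => (lift_ι_apply _ _ _ _).trans (map_mk _ _ _ _)
  change _ = numeratorRingHom (ιMulti A k ξ)
  simp only [ιMulti_apply, map_list_prod, List.map_ofFn, Function.comp_def, hι]

variable [Module.Finite A L] [Module.Projective A L]

theorem ExteriorAlgebra.ιMulti_eq_zero_of_constantRank {n k : ℕ} (hrank : ConstantRank A L n)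
    (hk : n < k) (ξ : Fin k → L) : ιMulti A k ξ = 0 := by
  refine Module.eq_zero_of_localization_maximal (R := A)
    (fun P _ => LocalizedModule P.primeCompl (ExteriorAlgebra A L))
    (fun P _ => mkLinearMap P.primeCompl _) _ fun P hP => ?_
  have : Module.Free (Localization P.primeCompl) (LocalizedModule P.primeCompl L) :=
    Module.mem_freeLocus.mp <| Module.freeLocus_eq_univ (R := A) (M := L) ▸
      Set.mem_univ (⟨P, hP.isPrime⟩ : PrimeSpectrum A)
  have : Module.Finite (Localization P.primeCompl) (LocalizedModule P.primeCompl L) :=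
    Module.Finite.of_isLocalizedModule P.primeCompl (mkLinearMap P.primeCompl L)
  have hcard := (Module.finrank_eq_card_chooseBasisIndex (Localization P.primeCompl)
    (LocalizedModule P.primeCompl L)).symm.trans (hrank ⟨P, hP.isPrime⟩)
  let b := (Module.Free.chooseBasis _ _).reindex (Fintype.equivFinOfCardEq hcard)
  rw [mkLinearMap_apply, ← toLocalizedModule_ιMulti, ιMulti_eq_zero_of_basis_of_lt b hk, map_zero]

theorem ExteriorAlgebra.exteriorPower_eq_bot_of_constantRank {n k : ℕ}
    (hrank : ConstantRank A L n) (hk : n < k) : ⋀[A]^k L = ⊥ := by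
  rw [← ιMulti_span_fixedDegree, Submodule.span_eq_bot]
  rintro _ ⟨ξ, rfl⟩
  exact ιMulti_eq_zero_of_constantRank hrank hk ξ

theorem ExteriorAlgebra.mul_eq_zero_of_constantRank {n p q : ℕ} (hrank : ConstantRank A L n)
    (hpq : n < p + q) {x y : ExteriorAlgebra A L} (hx : x ∈ ⋀[A]^p L) (hy : y ∈ ⋀[A]^q L) :
    x * y = 0 := by
  have hxy : x * y ∈ ⋀[A]^(p + q) L := SetLike.mul_mem_graded hx hy
  rwa [exteriorPower_eq_bot_of_constantRank hrank hpq, Submodule.mem_bot] at hxy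

end Localization

namespace LieRinehart.IsGenerator

variable {R A L : Type*} [CommRing R] [CommRing A] [Algebra R A] [LieRing L] [Module A L]
  {gb : ExteriorAlgebra A L → ExteriorAlgebra A L → ExteriorAlgebra A L}
  {D : ExteriorAlgebra A L → ExteriorAlgebra A L}

theorem map_zero (hD : IsGenerator (R := R) gb D) : D 0 = 0 := by
  have h := hD.1 0 0
  rwa [add_zero, left_eq_add] at h

theorem smul_mul_add_smul_eq_neg_of_mul_eq_zero (hD : IsGenerator (R := R) gb D) {p : ℕ}
    {x y : ExteriorAlgebra A L} (hx : x ∈ ⋀[A]^p L) (hxy : x * y = 0) :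
    (-1 : ℤ)^p • (x * D y) + (-1 : ℤ)^p • gb x y = -(D x * y) := by
  rw [hD.2.2.2 p x y hx, hxy, hD.map_zero, smul_smul, ← pow_add, Even.neg_one_pow ⟨p, rfl⟩,
    one_smul]
  abel

end LieRinehart.IsGenerator

theorem GenConnRel.coe_covDeriv_phiForm {LR : LieRinehart R A L} {n : ℕ}
    [Module.Finite A L] [Module.Projective A L] (hrank : ConstantRank A L n)
    {gb : ExteriorAlgebra A L → ExteriorAlgebra A L → ExteriorAlgebra A L}
    {D : ExteriorAlgebra A L → ExteriorAlgebra A L} (hD : IsGenerator (R := R) gb D)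
    {cTop : L → ⋀[A]^n L → ⋀[A]^n L} (hRel : GenConnRel LR n D cTop)
    {p m : ℕ} (h : p + m = n) (α : ⋀[A]^p L) (ξ : Fin (m+1) → L) :
    ((covDeriv cTop m (phiForm h α) ξ : ⋀[A]^n L) : ExteriorAlgebra A L)
      = -(D α * ιMulti A (m+1) ξ) := by
  rcases p with _ | p
  · obtain rfl : m = n := by omega
    rw [hRel.2 m h α ξ, ιMulti_eq_zero_of_constantRank hrank m.lt_succ_self ξ, mul_zero,
      neg_zero, Submodule.coe_zero]
  · have hrel := hRel.1 p m h α (hD.2.2.1 (p + 1) α α.2) ξ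
    rw [neg_eq_iff_eq_neg.mp hrel.symm]
    rfl

theorem covDeriv_phi_eq_wedge_generator_add_bracket_general (LR : LieRinehart R A L)
    (n : ℕ) [Module.Finite A L] [Module.Projective A L] (hrank : ConstantRank A L n)
    (gb : ExteriorAlgebra A L → ExteriorAlgebra A L → ExteriorAlgebra A L)
    (D : ExteriorAlgebra A L → ExteriorAlgebra A L) (hD : IsGenerator (R := R) gb D)
    (cTop : L → ⋀[A]^n L → ⋀[A]^n L)
    (hRel : GenConnRel LR n D cTop)
    (p m : ℕ) (h : p + m = n) (α : ⋀[A]^p L) (ξ : Fin (m+1) → L) :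
    ((covDeriv cTop m (phiForm h α) ξ : ⋀[A]^n L) : ExteriorAlgebra A L)
      = (-1 : ℤ)^p • ((α : ExteriorAlgebra A L) * D (ιMulti A (m+1) ξ))
        + (-1 : ℤ)^p • gb (α : ExteriorAlgebra A L) (ιMulti A (m+1) ξ) := by
  have hξ : ιMulti A (m+1) ξ ∈ ⋀[A]^(m+1) L := ιMulti_range A (m+1) (Set.mem_range_self ξ)
  rw [hRel.coe_covDeriv_phiForm hrank hD, hD.smul_mul_add_smul_eq_neg_of_mul_eq_zero α.2
    (mul_eq_zero_of_constantRank hrank (by omega) α.2 hξ)]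

/-- Remark 1.9: for `α ∈ ⋀^p L` and `β = ξ_1∧…∧ξ_{n−p+1}`,
`d^∇φ_α(β) = (−1)^p α ∧ (Dβ) + (−1)^p [α, β]`, where `[ , ]` is the Gerstenhaber
bracket and `∇` corresponds to `D` via `φ_{Dα} = −d^∇φ_α`. -/
theorem covDeriv_phi_eq_wedge_generator_add_bracket (LR : LieRinehart R A L)
    (n : ℕ) [Module.Finite A L] [Module.Projective A L] (hrank : ConstantRank A L n)
    (gb : ExteriorAlgebra A L → ExteriorAlgebra A L → ExteriorAlgebra A L)
    (hgb : LR.IsGerstenhaberBracket gb)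
    (D : ExteriorAlgebra A L → ExteriorAlgebra A L) (hD : IsGenerator (R := R) gb D)
    (cTop : L → ⋀[A]^n L → ⋀[A]^n L) (hcTop : LR.IsConnection cTop)
    (hRel : GenConnRel LR n D cTop)
    (p m : ℕ) (h : p + m = n) (α : ⋀[A]^p L) (ξ : Fin (m+1) → L) :
    ((covDeriv cTop m (phiForm h α) ξ : ⋀[A]^n L) : ExteriorAlgebra A L)
      = (-1 : ℤ)^p • ((α : ExteriorAlgebra A L) * D (ιMulti A (m+1) ξ))
        + (-1 : ℤ)^p • gb (α : ExteriorAlgebra A L) (ιMulti A (m+1) ξ) :=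
  covDeriv_phi_eq_wedge_generator_add_bracket_general LR n hrank gb D hD cTop hRel p m h α ξ
end

section
/- Suppose L is a finitely generated free A-module of rank n. Given any (A,L)-connection ∇̄ on Λ^n_A L and any torsion-free (A,L)-connection ∇^L on L inducing the connection ∇ on Λ^n_A L, write ∇̄_α(x) = ∇_α(x) + φ(α)x for an A-linear map φ : L → A. Then there exists an A-linear map Φ : L → End_A(L) with Tr(Φ(α)) = φ(α) and Φ(α)β = Φ(β)α for all α, β ∈ L, and the connection ∇̄^L_α = ∇^L_α + Φ(α) on L is torsion-free and induces ∇̄ on Λ^n_A L. -/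
/-! Common setup: Lie-Rinehart algebras, the exterior algebra `Λ_A L`
(realized as `ExteriorAlgebra A L` with its exterior powers `⋀[A]^p L`),
Gerstenhaber brackets and their generators, left/right `(A,L)`-connections,
Lie derivatives on the top exterior power, covariant derivatives of forms,
and the constant-rank condition. -/

open ExteriorAlgebra

open LieRinehart ExteriorAlgebra

variable {R A L : Type*} [CommRing R] [CommRing A] [Algebra R A]
  [LieRing L] [Module R L] [Module A L]

/-! Fix a basis vector `e` of `L` with coordinate function `ε`. The correction
`Φ(α)β = (φ(α) ε(β) + φ(β) ε(α) - φ(e) ε(α) ε(β)) e` is symmetric in `α, β`, so `∇^L + Φ` is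
again torsion-free, and its trace is `φ(α)`. Any endomorphism `T` of `L` acts on the top exterior
power by the derivation `ξ₁ ∧ … ∧ ξₙ ↦ Σⱼ ξ₁ ∧ … ∧ Tξⱼ ∧ … ∧ ξₙ`, and this is multiplication by
`Tr T`: on wedges of distinct basis vectors only the diagonal entries of `T` survive. Hence
`∇^L + Φ` induces `∇ + φ = ∇̄` on `⋀ⁿ L`. -/

namespace AlternatingMap

open Function

variable {A L M ι : Type*} [CommRing A] [AddCommGroup L] [Module A L]
  [AddCommGroup M] [Module A M] [DecidableEq ι]

theorem map_update_add_map_update_eq_zero (ω : L [⋀^ι]→ₗ[A] M) {ξ : ι → L} {i k : ι}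
    (hik : ξ i = ξ k) (hne : i ≠ k) (x : L) :
    ω (update ξ i x) + ω (update ξ k x) = 0 := by
  have hswap : update ξ k x = update ξ i x ∘ Equiv.swap i k := by
    ext m
    rcases eq_or_ne m i with rfl | hmi
    · simp [update_of_ne hne, update_of_ne hne.symm, hik]
    rcases eq_or_ne m k with rfl | hmk
    · simp
    · simp [update_of_ne hmi, update_of_ne hmk, Equiv.swap_apply_of_ne_of_ne hmi hmk]
  rw [hswap, ω.map_swap _ hne, add_neg_cancel]

theorem map_update_basis_comp [Finite ι] (ω : L [⋀^ι]→ₗ[A] M) (b : Module.Basis ι A L)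
    {v : ι → ι} (hv : Injective v) (j : ι) (y : L) :
    ω (update (fun i => b (v i)) j y) = b.repr y (v j) • ω (fun i => b (v i)) := by
  have := Fintype.ofFinite ι
  conv_lhs => rw [← b.sum_repr y, ω.map_update_sum]
  rw [Finset.sum_eq_single (v j)]
  · rw [ω.map_update_smul]
    exact congr_arg _ (congr_arg ω (update_eq_self j _))
  · intro i _ hij
    obtain ⟨k, rfl⟩ := Finite.injective_iff_surjective.mp hv i
    have hkj : k ≠ j := fun h => hij (h ▸ rfl)
    have hdup :
        update (fun i => b (v i)) j (b (v k)) j = update (fun i => b (v i)) j (b (v k)) k := by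
      simp [update_of_ne hkj]
    rw [ω.map_update_smul, ω.map_eq_zero_of_eq _ hdup hkj.symm, smul_zero]
  · simp

theorem _root_.MultilinearMap.compLinearMap_update_id_apply
    (f : MultilinearMap A (fun _ : ι => L) M) (T : L →ₗ[A] L) (j : ι) (ξ : ι → L) :
    f.compLinearMap (update (fun _ => LinearMap.id) j T) ξ = f (update ξ j (T (ξ j))) := by
  rw [MultilinearMap.compLinearMap_apply]
  congr 1
  ext i
  rcases eq_or_ne i j with rfl | hij
  · simp
  · simp [update_of_ne hij]

variable [Fintype ι]

theorem sum_map_update_eq_zero_of_eq (ω : L [⋀^ι]→ₗ[A] M) (T : L →ₗ[A] L) {ξ : ι → L}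
    {i k : ι} (hik : ξ i = ξ k) (hne : i ≠ k) :
    ∑ j, ω (update ξ j (T (ξ j))) = 0 := by
  have hrest : ∀ j ∈ Finset.univ, j ∉ ({i, k} : Finset ι) → ω (update ξ j (T (ξ j))) = 0 := by
    intro j _ hj
    simp only [Finset.mem_insert, Finset.mem_singleton, not_or] at hj
    refine ω.map_eq_zero_of_eq _ ?_ hne
    rwa [update_of_ne (Ne.symm hj.1), update_of_ne (Ne.symm hj.2)]
  rw [← Finset.sum_subset (Finset.subset_univ _) hrest, Finset.sum_pair hne, hik,
    map_update_add_map_update_eq_zero ω hik hne]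

def compDeriv (ω : L [⋀^ι]→ₗ[A] M) (T : L →ₗ[A] L) : L [⋀^ι]→ₗ[A] M where
  toMultilinearMap := ∑ j, ω.toMultilinearMap.compLinearMap (update (fun _ => LinearMap.id) j T)
  map_eq_zero_of_eq' _ _ _ hik hne := by
    simp only [MultilinearMap.toFun_eq_coe, _root_.sum_apply,
      MultilinearMap.compLinearMap_update_id_apply, coe_multilinearMap]
    exact sum_map_update_eq_zero_of_eq ω T hik hne

@[simp]
theorem compDeriv_apply (ω : L [⋀^ι]→ₗ[A] M) (T : L →ₗ[A] L) (ξ : ι → L) :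
    ω.compDeriv T ξ = ∑ j, ω (update ξ j (T (ξ j))) := by
  simp only [compDeriv, coe_mk, _root_.sum_apply,
    MultilinearMap.compLinearMap_update_id_apply, coe_multilinearMap]

theorem compDeriv_eq_trace_smul (ω : L [⋀^ι]→ₗ[A] M) (T : L →ₗ[A] L) (b : Module.Basis ι A L) :
    ω.compDeriv T = LinearMap.trace A L T • ω := by
  refine b.ext_alternating fun v hv => ?_
  have hbij : Bijective v := Finite.injective_iff_bijective.mp hv
  rw [compDeriv_apply, smul_apply,
    Finset.sum_congr rfl fun j _ => map_update_basis_comp ω b hv j _, ← Finset.sum_smul,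
    LinearMap.trace_eq_matrix_trace A b T]
  congr 1
  simp only [Matrix.trace, Matrix.diag, LinearMap.toMatrix_apply]
  exact Equiv.sum_comp (Equiv.ofBijective v hbij) (fun i => b.repr (T (b i)) i)

theorem sum_map_update_eq_trace_smul [Module.Free A L] [Module.Finite A L] {n : ℕ}
    (hn : Module.finrank A L = n) (ω : L [⋀^Fin n]→ₗ[A] M) (T : L →ₗ[A] L) (ξ : Fin n → L) :
    ∑ j, ω (update ξ j (T (ξ j))) = LinearMap.trace A L T • ω ξ := by
  rcases subsingleton_or_nontrivial A with hA | hA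
  · have := Module.subsingleton A M
    exact Subsingleton.elim _ _
  · rw [← compDeriv_apply, compDeriv_eq_trace_smul ω T (Module.finBasisOfFinrankEq A L hn),
      smul_apply]

end AlternatingMap

section SymmetricTraceLift

variable {A L : Type*} [CommRing A] [AddCommGroup L] [Module A L]

def symmetricTraceLift (ε φ : L →ₗ[A] A) (e : L) : L →ₗ[A] L →ₗ[A] L :=
  LinearMap.mk₂ A (fun α β => (φ α * ε β + φ β * ε α - φ e * ε α * ε β) • e)
    (fun α α' β => by simp only [map_add, ← add_smul]; congr 1; ring)
    (fun a α β => by simp only [map_smul, smul_eq_mul, smul_smul]; congr 1; ring)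
    (fun α β β' => by simp only [map_add, ← add_smul]; congr 1; ring)
    (fun a α β => by simp only [map_smul, smul_eq_mul, smul_smul]; congr 1; ring)

variable (ε φ : L →ₗ[A] A) (e : L)

theorem symmetricTraceLift_apply (α β : L) :
    symmetricTraceLift ε φ e α β = (φ α * ε β + φ β * ε α - φ e * ε α * ε β) • e := rfl

theorem symmetricTraceLift_apply_comm (α β : L) :
    symmetricTraceLift ε φ e α β = symmetricTraceLift ε φ e β α := by
  simp only [symmetricTraceLift_apply]
  congr 1
  ring

theorem trace_symmetricTraceLift [Module.Free A L] [Module.Finite A L] (he : ε e = 1) (α : L) :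
    LinearMap.trace A L (symmetricTraceLift ε φ e α) = φ α := by
  have hrankOne :
      symmetricTraceLift ε φ e α = (φ α • ε + ε α • φ - (φ e * ε α) • ε).smulRight e := by
    ext β
    simp only [symmetricTraceLift_apply, LinearMap.smulRight_apply, LinearMap.sub_apply,
      LinearMap.add_apply, LinearMap.smul_apply, smul_eq_mul]
    congr 1
    ring
  rw [hrankOne, LinearMap.trace_smulRight]
  simp only [LinearMap.sub_apply, LinearMap.add_apply, LinearMap.smul_apply, smul_eq_mul, he]
  ring

end SymmetricTraceLift

theorem exists_symmetric_bilinear_trace_eq {A L : Type*} [CommRing A] [AddCommGroup L]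
    [Module A L] [Module.Free A L] [Module.Finite A L] (φ : L →ₗ[A] A) :
    ∃ Phi : L →ₗ[A] L →ₗ[A] L,
      (∀ α, LinearMap.trace A L (Phi α) = φ α) ∧ ∀ α β, Phi α β = Phi β α := by
  rcases subsingleton_or_nontrivial L with hL | hL
  · refine ⟨0, fun α => ?_, fun α β => Subsingleton.elim _ _⟩
    rw [Subsingleton.elim α 0, map_zero, map_zero, map_zero]
  · let b := Module.Free.chooseBasis A L
    obtain ⟨i⟩ := b.index_nonempty
    refine ⟨symmetricTraceLift (b.coord i) φ (b i), trace_symmetricTraceLift _ _ _ ?_,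
      symmetricTraceLift_apply_comm _ _ _⟩
    simp

theorem exists_symmetric_Phi_torsionFree_inducing_general (LR : LieRinehart R A L)
    (n : ℕ) [Module.Free A L] [Module.Finite A L] (hrank : Module.finrank A L = n)
    (cbar : L → ⋀[A]^n L → ⋀[A]^n L) (cL : L → L → L)
    (htf : ∀ α β, cL α β - cL β α = ⁅α, β⁆)
    (cTop : L → ⋀[A]^n L → ⋀[A]^n L) (hind : LR.IsInducedTop n cL cTop)
    (φ : L →ₗ[A] A) (hφ : ∀ α (x : ⋀[A]^n L), cbar α x = cTop α x + φ α • x) :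
    ∃ Phi : L →ₗ[A] (L →ₗ[A] L),
      (∀ α, LinearMap.trace A L (Phi α) = φ α) ∧
      (∀ α β, Phi α β = Phi β α) ∧
      (∀ α β, (cL α β + Phi α β) - (cL β α + Phi β α) = ⁅α, β⁆) ∧
      (∀ α (ξ : Fin n → L),
        cbar α (wMulti A n ξ)
          = ∑ j : Fin n, wMulti A n (Function.update ξ j (cL α (ξ j) + Phi α (ξ j)))) := by
  obtain ⟨Phi, hPhi_trace, hPhi_symm⟩ := exists_symmetric_bilinear_trace_eq φ
  refine ⟨Phi, hPhi_trace, hPhi_symm, fun α β => ?_, fun α ξ => ?_⟩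
  · rw [hPhi_symm α β, add_sub_add_right_eq_sub, htf]
  · have hPhi_top := (ιMulti A n).sum_map_update_eq_trace_smul hrank (Phi α) ξ
    rw [hPhi_trace] at hPhi_top
    rw [hφ, hind.2 α ξ]
    apply Subtype.ext
    simp only [wMulti, AddSubmonoidClass.coe_finsetSum, Submodule.coe_add, Submodule.coe_smul,
      AlternatingMap.map_update_add, Finset.sum_add_distrib, hPhi_top]

/-- for `L` free of rank `n`, given a connection `∇̄` on `⋀^n L`, a
torsion-free connection `∇^L` on `L` inducing `∇` on `⋀^n L`, and
`∇̄_α(x) = ∇_α(x) + φ(α)x`, there exists an `A`-linear `Φ : L → End_A(L)` with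
`Tr(Φ(α)) = φ(α)` and `Φ(α)β = Φ(β)α`, such that `∇̄^L = ∇^L + Φ` is torsion-free and
induces `∇̄` on `⋀^n L`. -/
theorem exists_symmetric_Phi_torsionFree_inducing (LR : LieRinehart R A L)
    (n : ℕ) [Module.Free A L] [Module.Finite A L] (hrank : Module.finrank A L = n)
    (cbar : L → ⋀[A]^n L → ⋀[A]^n L) (hcbar : LR.IsConnection cbar)
    (cL : L → L → L) (hcL : LR.IsConnection cL)
    (htf : ∀ α β, cL α β - cL β α = ⁅α, β⁆)
    (cTop : L → ⋀[A]^n L → ⋀[A]^n L) (hind : LR.IsInducedTop n cL cTop)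
    (φ : L →ₗ[A] A) (hφ : ∀ α (x : ⋀[A]^n L), cbar α x = cTop α x + φ α • x) :
    ∃ Phi : L →ₗ[A] (L →ₗ[A] L),
      (∀ α, LinearMap.trace A L (Phi α) = φ α) ∧
      (∀ α β, Phi α β = Phi β α) ∧
      (∀ α β, (cL α β + Phi α β) - (cL β α + Phi β α) = ⁅α, β⁆) ∧
      (∀ α (ξ : Fin n → L),
        cbar α (wMulti A n ξ)
          = ∑ j : Fin n, wMulti A n (Function.update ξ j (cL α (ξ j) + Phi α (ξ j)))) :=
  exists_symmetric_Phi_torsionFree_inducing_general LR n hrank cbar cL htf cTop hind φ hφ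
end
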